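/- Let I_k be a Lüroth fundamental interval of level k. Then for every interval (α,β] ⊆ (0,1] and every n ≥ k, the Lebesgue measure satisfies m(L⁻ⁿ((α,β]) ∩ I_k) = m((α,β]) · m(I_k). -/

import Mathlib

/-- The first Lüroth digit of `x`: the unique integer `a ≥ 2` with
`1/a < x ≤ 1/(a-1)` (for `x ∈ (0,1]`). -/
noncomputable def lurothDigit (x : ℝ) : ℕ := ⌊1 / x⌋₊ + 1

/-- The Lüroth map on `[0,1]`. -/
noncomputable def lurothMap (x : ℝ) : ℝ :=
  if x = 0 then 0
  else (lurothDigit x : ℝ) * ((lurothDigit x : ℝ) - 1) * x - ((lurothDigit x : ℝ) - 1)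

/-- The Lüroth digit sequence of `x` (0-indexed: `lurothDigitSeq x n = a_{n+1}(x)`). -/
noncomputable def lurothDigitSeq (x : ℝ) (n : ℕ) : ℕ := lurothDigit (lurothMap^[n] x)

/-- The `n`-th term of the Lüroth series associated with the digit sequence `a`. -/
noncomputable def lurothTerm (a : ℕ → ℕ) (n : ℕ) : ℝ :=
  (∏ j ∈ Finset.range n, (1 : ℝ) / ((a j : ℝ) * ((a j : ℝ) - 1))) * (1 / (a n : ℝ))

/-- The value of the Lüroth series with digit sequence `a`. -/
noncomputable def lurothVal (a : ℕ → ℕ) : ℝ := ∑' n, lurothTerm a n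

/-- The finite Lüroth sum `⟨c₁, …, cₙ⟩`. -/
noncomputable def lurothFinSum (c : ℕ → ℕ) (n : ℕ) : ℝ := ∑ k ∈ Finset.range n, lurothTerm c k

/-- The fundamental interval of level `n` with digits `c`. -/
noncomputable def fundamentalInterval (n : ℕ) (c : ℕ → ℕ) : Set ℝ :=
  {x | x ∈ Set.Ioc (0 : ℝ) 1 ∧ ∀ j < n, lurothDigitSeq x j = c j}

/-!
Lebesgue measure on `(0,1]` is `L`-invariant, and every fundamental interval is obtained by
peeling off one digit at a time: `I_{k+1}(c) = C_{c₀} ∩ L⁻¹ I_k(c')`, where `C_a` is the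
cylinder of first digit `a` and `c'` the shifted digits. On `C_a` the map `L` is affine with
slope `a(a-1)` and maps `C_a` onto `(0,1]`, so `m(C_a ∩ L⁻¹ S) = m(C_a) · m(S)` for every
`S ⊆ (0,1]`. Induction on `k` gives `m(L⁻ᵏ B ∩ I_k) = m(B ∩ (0,1]) · m(I_k)` for all `B`, and
`L`-invariance takes care of the remaining `n - k` iterates.
-/

open MeasureTheory Set Function

noncomputable def lurothBranch (a : ℕ) (x : ℝ) : ℝ := a * (a - 1) * x - (a - 1)

def lurothCylinder (a : ℕ) : Set ℝ := {x | x ∈ Ioc (0 : ℝ) 1 ∧ lurothDigit x = a}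

lemma lurothMap_of_ne_zero {x : ℝ} (hx : x ≠ 0) :
    lurothMap x = lurothBranch (lurothDigit x) x :=
  if_neg hx

lemma lurothDigit_eq_iff {a : ℕ} (ha : 1 ≤ a) {x : ℝ} (hx : 0 < x) :
    lurothDigit x = a ↔ 1 < a * x ∧ (a - 1) * x ≤ 1 := by
  have hfloor : lurothDigit x = a ↔ ⌊1 / x⌋₊ = a - 1 := by unfold lurothDigit; omega
  rw [hfloor, Nat.floor_eq_iff (by positivity), Nat.cast_sub ha, Nat.cast_one, sub_add_cancel,
    le_div_iff₀ hx, div_lt_iff₀ hx, and_comm]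

lemma two_le_lurothDigit {x : ℝ} (hx : x ∈ Ioc (0 : ℝ) 1) : 2 ≤ lurothDigit x := by
  have : 1 ≤ ⌊1 / x⌋₊ := Nat.one_le_floor_iff _ |>.2 (one_le_one_div hx.1 hx.2)
  unfold lurothDigit
  omega

lemma lurothCylinder_eq_preimage {a : ℕ} (ha : 2 ≤ a) :
    lurothCylinder a = lurothBranch a ⁻¹' Ioc 0 1 := by
  have ha' : (2 : ℝ) ≤ a := by exact_mod_cast ha
  ext x
  simp only [lurothCylinder, lurothBranch, mem_ofPred_eq, mem_preimage, mem_Ioc]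
  constructor
  · rintro ⟨⟨hx0, -⟩, hdigit⟩
    obtain ⟨h1, h2⟩ := (lurothDigit_eq_iff (by omega) hx0).1 hdigit
    constructor <;> nlinarith
  · rintro ⟨h1, h2⟩
    have hax : 1 < a * x := by
      by_contra! h
      nlinarith [mul_nonneg (by linarith : (0 : ℝ) ≤ a - 1) (by linarith : 0 ≤ 1 - a * x)]
    have hx0 : 0 < x := by nlinarith
    have hdigit : 1 < a * x ∧ (a - 1) * x ≤ 1 := ⟨hax, by nlinarith⟩
    exact ⟨⟨hx0, by nlinarith⟩, (lurothDigit_eq_iff (by omega) hx0).2 hdigit⟩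

lemma lurothMap_eq_lurothBranch {a : ℕ} {x : ℝ} (hx : x ∈ lurothCylinder a) :
    lurothMap x = lurothBranch a x := by
  rw [lurothMap_of_ne_zero hx.1.1.ne', hx.2]

lemma lurothMap_mem_Ioc {x : ℝ} (hx : x ∈ Ioc (0 : ℝ) 1) : lurothMap x ∈ Ioc (0 : ℝ) 1 := by
  have hcyl : x ∈ lurothCylinder (lurothDigit x) := ⟨hx, rfl⟩
  rw [lurothMap_eq_lurothBranch hcyl]
  rwa [lurothCylinder_eq_preimage (two_le_lurothDigit hx)] at hcyl

lemma lurothCylinder_eq_empty {a : ℕ} (ha : a < 2) : lurothCylinder a = ∅ :=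
  eq_empty_of_forall_notMem fun x hx => by
    have := two_le_lurothDigit hx.1
    rw [hx.2] at this
    omega

lemma iUnion_lurothCylinder : ⋃ a, lurothCylinder a = Ioc (0 : ℝ) 1 := by
  ext x
  simp [lurothCylinder]

lemma pairwise_disjoint_lurothCylinder : Pairwise (Disjoint on lurothCylinder) :=
  fun _ _ hab => disjoint_left.2 fun _ hxa hxb => hab (hxa.2.symm.trans hxb.2)

lemma measurable_lurothDigit : Measurable lurothDigit :=
  ((measurable_const.div measurable_id).nat_floor).add_const 1

lemma measurable_lurothMap : Measurable lurothMap := by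
  have hdigit : Measurable fun x => (lurothDigit x : ℝ) :=
    measurable_from_top.comp measurable_lurothDigit
  exact Measurable.ite (measurableSet_singleton 0) measurable_const
    (((hdigit.mul (hdigit.sub_const 1)).mul measurable_id).sub (hdigit.sub_const 1))

lemma measurableSet_lurothCylinder (a : ℕ) : MeasurableSet (lurothCylinder a) :=
  measurableSet_Ioc.inter (measurable_lurothDigit (measurableSet_singleton a))

lemma volume_preimage_lurothBranch {a : ℕ} (ha : 2 ≤ a) (T : Set ℝ) :
    volume (lurothBranch a ⁻¹' T) = ENNReal.ofReal (a * (a - 1))⁻¹ * volume T := by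
  have ha' : (2 : ℝ) ≤ a := by exact_mod_cast ha
  have hslope : (0 : ℝ) < a * (a - 1) := by nlinarith
  have hcomp : lurothBranch a ⁻¹' T
      = (fun x : ℝ => a * (a - 1) * x) ⁻¹' ((· + -(a - 1 : ℝ)) ⁻¹' T) := by
    ext x
    simp [lurothBranch, sub_eq_add_neg]
  rw [hcomp, Real.volume_preimage_mul_left hslope.ne', measure_preimage_add_right,
    abs_of_pos (inv_pos.2 hslope)]

lemma volume_lurothCylinder_inter_preimage (a : ℕ) (S : Set ℝ) :
    volume (lurothCylinder a ∩ lurothMap ⁻¹' S)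
      = volume (lurothCylinder a) * volume (S ∩ Ioc 0 1) := by
  rcases lt_or_ge a 2 with ha | ha
  · simp [lurothCylinder_eq_empty ha]
  have hinter : lurothCylinder a ∩ lurothMap ⁻¹' S = lurothBranch a ⁻¹' (S ∩ Ioc 0 1) := by
    ext x
    constructor
    · rintro ⟨hcyl, hS⟩
      refine ⟨lurothMap_eq_lurothBranch hcyl ▸ hS, ?_⟩
      rwa [lurothCylinder_eq_preimage ha] at hcyl
    · rintro ⟨hS, hx⟩
      have hcyl : x ∈ lurothCylinder a := by rwa [lurothCylinder_eq_preimage ha]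
      exact ⟨hcyl, by rwa [mem_preimage, lurothMap_eq_lurothBranch hcyl]⟩
  rw [hinter, lurothCylinder_eq_preimage ha, volume_preimage_lurothBranch ha,
    volume_preimage_lurothBranch ha, Real.volume_Ioc, sub_zero, ENNReal.ofReal_one, mul_one]

theorem measurePreserving_lurothMap :
    MeasurePreserving lurothMap (volume.restrict (Ioc 0 1)) (volume.restrict (Ioc 0 1)) := by
  refine ⟨measurable_lurothMap, Measure.ext fun B hB => ?_⟩
  rw [Measure.map_apply measurable_lurothMap hB, Measure.restrict_apply' measurableSet_Ioc,
    Measure.restrict_apply' measurableSet_Ioc]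
  calc volume (lurothMap ⁻¹' B ∩ Ioc 0 1)
      = volume (⋃ a, lurothCylinder a ∩ lurothMap ⁻¹' B) := by
        rw [← iUnion_inter, iUnion_lurothCylinder, inter_comm]
    _ = ∑' a, volume (lurothCylinder a) * volume (B ∩ Ioc 0 1) := by
        rw [measure_iUnion (pairwise_disjoint_lurothCylinder.mono fun _ _ h => h.mono
          inter_subset_left inter_subset_left)
          fun a => (measurableSet_lurothCylinder a).inter (measurable_lurothMap hB)]
        simp only [volume_lurothCylinder_inter_preimage]
    _ = volume (B ∩ Ioc 0 1) := by
        rw [ENNReal.tsum_mul_right, ← measure_iUnion pairwise_disjoint_lurothCylinder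
          measurableSet_lurothCylinder, iUnion_lurothCylinder, Real.volume_Ioc, sub_zero,
          ENNReal.ofReal_one, one_mul]

lemma fundamentalInterval_subset_Ioc (k : ℕ) (c : ℕ → ℕ) :
    fundamentalInterval k c ⊆ Ioc 0 1 :=
  fun _ hx => hx.1

lemma fundamentalInterval_zero (c : ℕ → ℕ) : fundamentalInterval 0 c = Ioc 0 1 := by
  ext x
  simp [fundamentalInterval]

lemma fundamentalInterval_succ (k : ℕ) (c : ℕ → ℕ) :
    fundamentalInterval (k + 1) c
      = lurothCylinder (c 0) ∩ lurothMap ⁻¹' fundamentalInterval k (fun j => c (j + 1)) := by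
  ext x
  simp only [fundamentalInterval, lurothCylinder, lurothDigitSeq, mem_ofPred_eq, mem_inter_iff,
    mem_preimage, Nat.forall_lt_succ_left, iterate_zero_apply, iterate_succ_apply]
  constructor
  · rintro ⟨hx, hdigit, htail⟩
    exact ⟨⟨hx, hdigit⟩, lurothMap_mem_Ioc hx, htail⟩
  · rintro ⟨⟨hx, hdigit⟩, -, htail⟩
    exact ⟨hx, hdigit, htail⟩

lemma volume_preimage_iterate_inter_fundamentalInterval (k : ℕ) (c : ℕ → ℕ) (B : Set ℝ) :
    volume (lurothMap^[k] ⁻¹' B ∩ fundamentalInterval k c)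
      = volume (B ∩ Ioc 0 1) * volume (fundamentalInterval k c) := by
  induction k generalizing c with
  | zero => simp [fundamentalInterval_zero]
  | succ k ih =>
    set c' : ℕ → ℕ := fun j => c (j + 1)
    have hset : lurothMap^[k + 1] ⁻¹' B ∩ fundamentalInterval (k + 1) c
        = lurothCylinder (c 0)
            ∩ lurothMap ⁻¹' (lurothMap^[k] ⁻¹' B ∩ fundamentalInterval k c') := by
      rw [fundamentalInterval_succ, iterate_succ, preimage_comp, preimage_inter,
        inter_left_comm]
    rw [hset, volume_lurothCylinder_inter_preimage, fundamentalInterval_succ,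
      volume_lurothCylinder_inter_preimage,
      inter_eq_left.2 (inter_subset_right.trans (fundamentalInterval_subset_Ioc k c')),
      inter_eq_left.2 (fundamentalInterval_subset_Ioc k c'), ih]
    ring

theorem volume_preimage_inter_fundamentalInterval_general (k : ℕ) (c : ℕ → ℕ)
    (α β : ℝ) (hab : Set.Ioc α β ⊆ Set.Ioc (0 : ℝ) 1)
    (n : ℕ) (hn : k ≤ n) :
    MeasureTheory.volume (lurothMap^[n] ⁻¹' Set.Ioc α β ∩ fundamentalInterval k c)
      = MeasureTheory.volume (Set.Ioc α β) *
          MeasureTheory.volume (fundamentalInterval k c) := by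
  obtain ⟨m, rfl⟩ := Nat.exists_eq_add_of_le' hn
  have hinvariant : volume (lurothMap^[m] ⁻¹' Ioc α β ∩ Ioc 0 1) = volume (Ioc α β) := by
    rw [← Measure.restrict_apply' measurableSet_Ioc,
      (measurePreserving_lurothMap.iterate m).measure_preimage measurableSet_Ioc.nullMeasurableSet,
      Measure.restrict_apply' measurableSet_Ioc, inter_eq_left.2 hab]
  rw [iterate_add, preimage_comp, volume_preimage_iterate_inter_fundamentalInterval,
    hinvariant]

/-- For a fundamental interval `I_k` of level `k`, any interval
`(α,β] ⊆ (0,1]` and any `n ≥ k`, `m(L⁻ⁿ((α,β]) ∩ I_k) = m((α,β]) · m(I_k)`. -/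
theorem volume_preimage_inter_fundamentalInterval (k : ℕ) (c : ℕ → ℕ)
    (hc : ∀ j < k, 2 ≤ c j) (α β : ℝ) (hab : Set.Ioc α β ⊆ Set.Ioc (0 : ℝ) 1)
    (n : ℕ) (hn : k ≤ n) :
    MeasureTheory.volume (lurothMap^[n] ⁻¹' Set.Ioc α β ∩ fundamentalInterval k c)
      = MeasureTheory.volume (Set.Ioc α β) *
          MeasureTheory.volume (fundamentalInterval k c) :=
  volume_preimage_inter_fundamentalInterval_general k c α β hab n hn
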